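/- arXiv:2206.08177 — 5 statements merged into one kernel-verified Lean document; each statement's English description precedes it below -/
import Mathlib

section
/- Let (S, d) be a metric space equipped with a finite Borel measure μ. Let J₁,…,J_M ⊆ S be pairwise disjoint measurable sets with μ(J_k) > 0 for each k, let J₀ = S \ (J₁ ∪ … ∪ J_M), and set Δ = μ(J₀)^{1/2} + max_{k=1,…,M} diam(J_k). Define the piecewise-averaging operator (P g)(x) = Σ_{k=1}^M 1_{J_k}(x) · (1/μ(J_k)) ∫_{J_k} g dμ. Suppose g : S → ℝ is measurable and C ≥ 0 satisfies |g(x)| ≤ C for all x ∈ S and |g(x) − g(y)| ≤ C·d(x,y) for all x, y ∈ S. Then (∫_S (g − P g)² dμ)^{1/2} ≤ (1 + μ(S))^{1/2} · C · Δ. -/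
open MeasureTheory
open scoped ENNReal

/-!
On a piece `J k`, `g x - P g x` is the distance from `g x` to an average of values of `g` on
`J k`; that average lies in the closed convex hull of `g '' J k`, so the distance is at most
`diam (g '' J k) ≤ C diam (J k) ≤ C D` with `D = max_k diam (J k)`. Off the pieces `P g = 0`
and `|g| ≤ C`. Integrating,
`‖g - P g‖₂² ≤ C² μ(J₀) + C² D² μ(S) ≤ (1 + μ(S)) C² (μ(J₀)^{1/2} + D)²`.
-/

open Metric

theorem edist_setAverage_le_ediam_image {α E : Type*} [MeasurableSpace α] {μ : Measure α}
    [NormedAddCommGroup E] [NormedSpace ℝ E] [CompleteSpace E] {f : α → E} {s : Set α} {x : α}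
    (hx : x ∈ s) (hs : MeasurableSet s) (h0 : μ s ≠ 0) (hμs : μ s ≠ ∞)
    (hf : IntegrableOn f s μ) :
    edist (f x) (⨍ y in s, f y ∂μ) ≤ ediam (f '' s) := by
  have hsub : f '' s ⊆ convexHull ℝ (f '' s) := subset_convexHull ℝ _
  have havg : (⨍ y in s, f y ∂μ) ∈ closure (convexHull ℝ (f '' s)) :=
    (convex_convexHull ℝ _).set_average_mem_closure h0 hμs
      (ae_restrict_of_forall_mem hs fun y hy => hsub ⟨y, hy, rfl⟩) hf
  calc edist (f x) (⨍ y in s, f y ∂μ)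
      ≤ ediam (closure (convexHull ℝ (f '' s))) :=
        edist_le_ediam_of_mem (subset_closure (hsub ⟨x, hx, rfl⟩)) havg
    _ = ediam (f '' s) := by rw [ediam_closure, convexHull_ediam]

theorem ENNReal.rpow_one_div_two_sq (x : ℝ≥0∞) : (x ^ (1 / 2 : ℝ)) ^ 2 = x := by
  rw [one_div, ← ENNReal.rpow_ofNat, ENNReal.rpow_inv_rpow two_ne_zero]

theorem ENNReal.sq_mul_add_sq_mul_le (a c d m : ℝ≥0∞) :
    c ^ 2 * a + (c * d) ^ 2 * m ≤ ((1 + m) ^ (1 / 2 : ℝ) * c * (a ^ (1 / 2 : ℝ) + d)) ^ 2 := by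
  have hsq : a + d ^ 2 * m ≤ (1 + m) * (a ^ (1 / 2 : ℝ) + d) ^ 2 :=
    calc a + d ^ 2 * m ≤ (1 + m) * (a + d ^ 2) := by
          rw [add_mul, one_mul, mul_add]
          exact add_le_add le_self_add (by rw [mul_comm]; exact le_add_self)
      _ ≤ (1 + m) * (a ^ (1 / 2 : ℝ) + d) ^ 2 := by
          gcongr
          rw [add_sq, ENNReal.rpow_one_div_two_sq]
          exact add_le_add_left le_self_add _
  calc c ^ 2 * a + (c * d) ^ 2 * m = c ^ 2 * (a + d ^ 2 * m) := by ring
    _ ≤ c ^ 2 * ((1 + m) * (a ^ (1 / 2 : ℝ) + d) ^ 2) := by gcongr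
    _ = ((1 + m) ^ (1 / 2 : ℝ) * c * (a ^ (1 / 2 : ℝ) + d)) ^ 2 := by
        rw [mul_pow, mul_pow, ENNReal.rpow_one_div_two_sq]; ring

section PiecewiseAverage

variable {α ι E : Type*} [MeasurableSpace α] [Fintype ι] [NormedAddCommGroup E] [NormedSpace ℝ E]

noncomputable def piecewiseAverage (μ : Measure α) (J : ι → Set α) (g : α → E) (x : α) : E :=
  ∑ k, (J k).indicator (fun _ => ⨍ y in J k, g y ∂μ) x

variable {μ : Measure α} {J : ι → Set α} {g : α → E} {x : α}

theorem piecewiseAverage_apply_of_mem (hJ : Pairwise (Function.onFun Disjoint J)) {k : ι}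
    (hx : x ∈ J k) : piecewiseAverage μ J g x = ⨍ y in J k, g y ∂μ := by
  rw [piecewiseAverage, Finset.sum_eq_single k, Set.indicator_of_mem hx]
  · exact fun j _ hjk => Set.indicator_of_notMem (Set.disjoint_right.mp (hJ hjk) hx) _
  · exact fun hk => absurd (Finset.mem_univ k) hk

theorem piecewiseAverage_apply_of_notMem (hx : x ∉ ⋃ k, J k) : piecewiseAverage μ J g x = 0 :=
  Finset.sum_eq_zero fun k _ =>
    Set.indicator_of_notMem (fun hk => hx (Set.mem_iUnion.mpr ⟨k, hk⟩)) _

variable [PseudoEMetricSpace α] [CompleteSpace E] [IsFiniteMeasure μ]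

theorem enorm_sub_piecewiseAverage_sq_le (hJmeas : ∀ k, MeasurableSet (J k))
    (hJdisj : Pairwise (Function.onFun Disjoint J)) (hJpos : ∀ k, μ (J k) ≠ 0)
    (hg : Integrable g μ) {B : ℝ≥0∞} (hbd : ∀ x, ‖g x‖ₑ ≤ B) {K : NNReal}
    (hlip : LipschitzWith K g) (x : α) :
    ‖g x - piecewiseAverage μ J g x‖ₑ ^ 2 ≤
      (⋃ k, J k)ᶜ.indicator (fun _ => B ^ 2) x + (K * ⨆ k, ediam (J k)) ^ 2 := by
  by_cases hx : x ∈ ⋃ k, J k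
  · obtain ⟨k, hxk⟩ := Set.mem_iUnion.mp hx
    have hdist : ‖g x - piecewiseAverage μ J g x‖ₑ ≤ K * ⨆ k, ediam (J k) := by
      rw [← edist_eq_enorm_sub, piecewiseAverage_apply_of_mem hJdisj hxk]
      calc edist (g x) (⨍ y in J k, g y ∂μ) ≤ ediam (g '' J k) :=
            edist_setAverage_le_ediam_image hxk (hJmeas k) (hJpos k) (measure_ne_top μ _)
              hg.integrableOn
        _ ≤ K * ediam (J k) := hlip.ediam_image_le _
        _ ≤ K * ⨆ k, ediam (J k) := by gcongr; exact le_iSup (fun k => ediam (J k)) k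
    exact (pow_le_pow_left' hdist 2).trans le_add_self
  · rw [piecewiseAverage_apply_of_notMem hx, sub_zero, Set.indicator_of_mem hx]
    exact (pow_le_pow_left' (hbd x) 2).trans le_self_add

theorem lintegral_enorm_sub_piecewiseAverage_sq_le (hJmeas : ∀ k, MeasurableSet (J k))
    (hJdisj : Pairwise (Function.onFun Disjoint J)) (hJpos : ∀ k, μ (J k) ≠ 0)
    (hg : Integrable g μ) {B : ℝ≥0∞} (hbd : ∀ x, ‖g x‖ₑ ≤ B) {K : NNReal}
    (hlip : LipschitzWith K g) :
    ∫⁻ x, ‖g x - piecewiseAverage μ J g x‖ₑ ^ 2 ∂μ ≤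
      B ^ 2 * μ (⋃ k, J k)ᶜ + (K * ⨆ k, ediam (J k)) ^ 2 * μ Set.univ := by
  have hA : MeasurableSet (⋃ k, J k)ᶜ := (MeasurableSet.iUnion hJmeas).compl
  calc ∫⁻ x, ‖g x - piecewiseAverage μ J g x‖ₑ ^ 2 ∂μ
      ≤ ∫⁻ x, (⋃ k, J k)ᶜ.indicator (fun _ => B ^ 2) x + (K * ⨆ k, ediam (J k)) ^ 2 ∂μ :=
        lintegral_mono (enorm_sub_piecewiseAverage_sq_le hJmeas hJdisj hJpos hg hbd hlip)
    _ = B ^ 2 * μ (⋃ k, J k)ᶜ + (K * ⨆ k, ediam (J k)) ^ 2 * μ Set.univ := by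
        rw [lintegral_add_left (measurable_const.indicator hA), lintegral_indicator_const hA,
          lintegral_const]

end PiecewiseAverage

theorem stmt1_general {S : Type*} [MetricSpace S] [MeasurableSpace S]
    (μ : Measure S) [IsFiniteMeasure μ] (M : ℕ) (J : Fin M → Set S)
    (hJmeas : ∀ k, MeasurableSet (J k))
    (hJdisj : Pairwise (Function.onFun Disjoint J))
    (hJpos : ∀ k, 0 < μ (J k))
    (g : S → ℝ) (hgmeas : Measurable g)
    (C : ℝ)
    (hbd : ∀ x, |g x| ≤ C)
    (hlip : ∀ x y, |g x - g y| ≤ C * dist x y)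
    (Pg : S → ℝ)
    (hPg : ∀ x, Pg x =
      ∑ k : Fin M, (J k).indicator
        (fun _ => (μ (J k)).toReal⁻¹ * ∫ y in J k, g y ∂μ) x)
    (Δ : ℝ≥0∞)
    (hΔ : Δ = (μ (Set.univ \ ⋃ k, J k)) ^ (1 / 2 : ℝ) + ⨆ k, EMetric.diam (J k)) :
    (∫⁻ x, ENNReal.ofReal ((g x - Pg x) ^ 2) ∂μ) ^ (1 / 2 : ℝ) ≤
      (1 + μ Set.univ) ^ (1 / 2 : ℝ) * ENNReal.ofReal C * Δ := by
  have hPg_eq : Pg = piecewiseAverage μ J g := by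
    ext x
    simp [hPg, piecewiseAverage, setAverage_eq, measureReal_def]
  have hint : ∫⁻ x, ENNReal.ofReal ((g x - Pg x) ^ 2) ∂μ =
      ∫⁻ x, ‖g x - piecewiseAverage μ J g x‖ₑ ^ 2 ∂μ := by
    simp_rw [hPg_eq, Real.enorm_eq_ofReal_abs, ← ENNReal.ofReal_pow (abs_nonneg _), sq_abs]
  have hbd' : ∀ x, ‖g x‖ₑ ≤ ENNReal.ofReal C := fun x => by
    rw [Real.enorm_eq_ofReal_abs]; exact ENNReal.ofReal_le_ofReal (hbd x)
  have hlip' : LipschitzWith (Real.toNNReal C) g :=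
    LipschitzWith.of_dist_le' fun x y => by rw [Real.dist_eq]; exact hlip x y
  have hg : Integrable g μ :=
    Integrable.of_bound hgmeas.aestronglyMeasurable C (ae_of_all _ hbd)
  have hbound := lintegral_enorm_sub_piecewiseAverage_sq_le hJmeas hJdisj
    (fun k => (hJpos k).ne') hg hbd' hlip'
  rw [hint, hΔ, ← Set.compl_eq_univ_sdiff, one_div, ENNReal.rpow_inv_le_iff two_pos,
    ENNReal.rpow_ofNat, ← one_div]
  exact hbound.trans (ENNReal.sq_mul_add_sq_mul_le _ _ _ _)

/-- Lemma 3.2(i): if `g` is bounded by `C` and `C`-Lipschitz on a finite metric measure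
space `(S, d, μ)`, and `P g` is the piecewise average of `g` over pairwise disjoint sets
`J₁,…,J_M` of positive measure, then
`‖g - P g‖_{L²(μ)} ≤ (1 + μ(S))^{1/2} · C · Δ`, where
`Δ = μ(S \ ⋃ J_k)^{1/2} + sup_k diam(J_k)`. -/
theorem stmt1 {S : Type*} [MetricSpace S] [MeasurableSpace S] [BorelSpace S]
    (μ : Measure S) [IsFiniteMeasure μ] (M : ℕ) (J : Fin M → Set S)
    (hJmeas : ∀ k, MeasurableSet (J k))
    (hJdisj : Pairwise (Function.onFun Disjoint J))
    (hJpos : ∀ k, 0 < μ (J k))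
    (g : S → ℝ) (hgmeas : Measurable g)
    (C : ℝ) (hC : 0 ≤ C)
    (hbd : ∀ x, |g x| ≤ C)
    (hlip : ∀ x y, |g x - g y| ≤ C * dist x y)
    (Pg : S → ℝ)
    (hPg : ∀ x, Pg x =
      ∑ k : Fin M, (J k).indicator
        (fun _ => (μ (J k)).toReal⁻¹ * ∫ y in J k, g y ∂μ) x)
    (Δ : ℝ≥0∞)
    (hΔ : Δ = (μ (Set.univ \ ⋃ k, J k)) ^ (1 / 2 : ℝ) + ⨆ k, EMetric.diam (J k)) :
    (∫⁻ x, ENNReal.ofReal ((g x - Pg x) ^ 2) ∂μ) ^ (1 / 2 : ℝ) ≤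
      (1 + μ Set.univ) ^ (1 / 2 : ℝ) * ENNReal.ofReal C * Δ :=
  stmt1_general μ M J hJmeas hJdisj hJpos g hgmeas C hbd hlip Pg hPg Δ hΔ
end

section
/- Let E be a finite-dimensional real normed vector space, let Y be a real Banach space, and let K ⊆ E be a compact convex set. Let F : E → Y be continuously differentiable (of class C¹). Assume that the restriction of F to K is injective and that for every x ∈ K the Fréchet derivative DF(x) : E → Y is an injective linear map. Then there exists a constant S > 0 such that ‖x − x'‖ ≤ S · ‖F(x) − F(x')‖ for all x, x' ∈ K. -/
/-!
Near each point `a` of `K` the map `F` is a small perturbation of the injective linear map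
`DF(a)`, which is bounded below because `E` is finite-dimensional; hence `F` is antilipschitz
on a neighbourhood of `a`. If no global constant existed, there would be pairs `xₙ, yₙ ∈ K`
with `n ‖F xₙ - F yₙ‖ < ‖xₙ - yₙ‖`. By compactness they converge along a subsequence to some
`(a, b)`; then `F a = F b`, so `a = b` by injectivity, and eventually both points lie in the
neighbourhood of `a` where `F` is antilipschitz, which is impossible for large `n`.
-/

open Filter Topology
open scoped NNReal

theorem HasStrictFDerivAt.exists_mem_nhds_antilipschitzWith {𝕜 E F : Type*}
    [NontriviallyNormedField 𝕜] [NormedAddCommGroup E] [NormedSpace 𝕜 E]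
    [NormedAddCommGroup F] [NormedSpace 𝕜 F] {f : E → F} {f' : E →L[𝕜] F} {a : E}
    (hf : HasStrictFDerivAt f f' a) {K : ℝ≥0} (hK : AntilipschitzWith K f') (hK0 : 0 < K) :
    ∃ K' : ℝ≥0, ∃ s ∈ 𝓝 a, AntilipschitzWith K' (s.domRestrict f) := by
  obtain ⟨s, hs, hfs⟩ := hf.approximates_deriv_on_nhds (c := K⁻¹ / 2) (.inr (by positivity))
  exact ⟨_, s, hs, (hK.domRestrict s).add_sub_lipschitzWith hfs.lipschitz_sub
    (half_lt_self (inv_pos.2 hK0))⟩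

theorem IsCompact.exists_pos_dist_le_mul_dist_of_injOn {X Y : Type*} [PseudoMetricSpace X]
    [MetricSpace Y] {K : Set X} (hK : IsCompact K) {f : X → Y} (hf : ContinuousOn f K)
    (hinj : Set.InjOn f K)
    (hloc : ∀ a ∈ K, ∃ C : ℝ≥0, ∃ s ∈ 𝓝 a, AntilipschitzWith C (s.domRestrict f)) :
    ∃ C > (0 : ℝ), ∀ x ∈ K, ∀ y ∈ K, dist x y ≤ C * dist (f x) (f y) := by
  by_contra! h
  choose x hx y hy hxy using fun n : ℕ => h (n + 1) n.cast_add_one_pos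
  have hdist : Tendsto (fun n => dist (f (x n)) (f (y n))) atTop (𝓝 0) := by
    refine squeeze_zero (fun _ => dist_nonneg) (fun n => ?_)
      (by simpa using tendsto_one_div_add_atTop_nhds_zero_nat.const_mul (Metric.diam K))
    rw [← div_eq_mul_inv, le_div_iff₀ n.cast_add_one_pos, mul_comm]
    exact (hxy n).le.trans (Metric.dist_le_diam_of_mem hK.isBounded (hx n) (hy n))
  obtain ⟨⟨a, b⟩, ⟨ha, hb⟩, φ, hφ, hlim⟩ :=
    (hK.prod hK).tendsto_subseq (x := fun n => (x n, y n)) fun n => ⟨hx n, hy n⟩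
  have hxa : Tendsto (x ∘ φ) atTop (𝓝 a) := hlim.fst_nhds
  have hyb : Tendsto (y ∘ φ) atTop (𝓝 b) := hlim.snd_nhds
  have hfab : f a = f b := by
    have hfx := (hf a ha).tendsto.comp (tendsto_nhdsWithin_iff.2 ⟨hxa, .of_forall (hx <| φ ·)⟩)
    have hfy := (hf b hb).tendsto.comp (tendsto_nhdsWithin_iff.2 ⟨hyb, .of_forall (hy <| φ ·)⟩)
    exact dist_eq_zero.1 (tendsto_nhds_unique (hfx.dist hfy) (hdist.comp hφ.tendsto_atTop))
  obtain rfl : a = b := hinj ha hb hfab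
  obtain ⟨C, s, hs, hC⟩ := hloc a ha
  obtain ⟨n, ⟨hxs, hys⟩, hn⟩ : ∃ n, (x (φ n) ∈ s ∧ y (φ n) ∈ s) ∧ (C : ℝ) ≤ φ n + 1 :=
    ((hxa.eventually_mem hs).and (hyb.eventually_mem hs)).and
      ((tendsto_atTop_add_const_right _ 1 (tendsto_natCast_atTop_atTop.comp
        hφ.tendsto_atTop)).eventually_ge_atTop (C : ℝ)) |>.exists
  refine lt_irrefl (dist (x (φ n)) (y (φ n))) ?_
  calc dist (x (φ n)) (y (φ n))
      ≤ C * dist (f (x (φ n))) (f (y (φ n))) := hC.le_mul_dist ⟨_, hxs⟩ ⟨_, hys⟩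
    _ ≤ (φ n + 1) * dist (f (x (φ n))) (f (y (φ n))) := by gcongr
    _ < dist (x (φ n)) (y (φ n)) := hxy (φ n)

theorem stmt5_general {E Y : Type*} [NormedAddCommGroup E] [NormedSpace ℝ E]
    [FiniteDimensional ℝ E] [NormedAddCommGroup Y] [NormedSpace ℝ Y]
    (K : Set E) (hKcomp : IsCompact K)
    (F : E → Y) (hF : ContDiff ℝ 1 F)
    (hFinj : Set.InjOn F K)
    (hDFinj : ∀ x ∈ K, Function.Injective (fderiv ℝ F x)) :
    ∃ S > (0 : ℝ), ∀ x ∈ K, ∀ x' ∈ K, ‖x - x'‖ ≤ S * ‖F x - F x'‖ := by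
  have hloc (a : E) (ha : a ∈ K) :
      ∃ C : ℝ≥0, ∃ s ∈ 𝓝 a, AntilipschitzWith C (s.domRestrict F) := by
    obtain ⟨C, hC0, hC⟩ := (fderiv ℝ F a : E →ₗ[ℝ] Y).exists_antilipschitzWith
      (LinearMap.ker_eq_bot.2 (hDFinj a ha))
    exact (hF.hasStrictFDerivAt one_ne_zero).exists_mem_nhds_antilipschitzWith hC hC0
  simpa only [dist_eq_norm] using
    hKcomp.exists_pos_dist_le_mul_dist_of_injOn hF.continuous.continuousOn hFinj hloc

/-- The Lipschitz-stability-from-injectivity principle (Bourgeois;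
Alberti–Arroyo–Santacesaria) underlying Proposition 3.2: a `C¹` map `F` on a
finite-dimensional space that is injective on a compact convex set `K` and has
injective derivative at every point of `K` satisfies a Lipschitz stability estimate
on `K`. -/
theorem stmt5 {E Y : Type*} [NormedAddCommGroup E] [NormedSpace ℝ E]
    [FiniteDimensional ℝ E] [NormedAddCommGroup Y] [NormedSpace ℝ Y]
    [CompleteSpace Y]
    (K : Set E) (hKcomp : IsCompact K) (hKconv : Convex ℝ K)
    (F : E → Y) (hF : ContDiff ℝ 1 F)
    (hFinj : Set.InjOn F K)
    (hDFinj : ∀ x ∈ K, Function.Injective (fderiv ℝ F x)) :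
    ∃ S > (0 : ℝ), ∀ x ∈ K, ∀ x' ∈ K, ‖x - x'‖ ≤ S * ‖F x - F x'‖ :=
  stmt5_general K hKcomp F hF hFinj hDFinj
end

section
/- Let E and Y be real normed vector spaces, let K ⊆ E be a convex set, and let F, G : E → Y be maps that are Fréchet differentiable at every point of E. Let S > 0 and assume: (i) ‖x − x'‖ ≤ S·‖F(x) − F(x')‖ for all x, x' ∈ K; and (ii) ‖DF(x) − DG(x)‖ ≤ 1/(2S) in operator norm for all x ∈ K. Then ‖x − x'‖ ≤ 2S·‖G(x) − G(x')‖ for all x, x' ∈ K. -/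
/-!
The difference `F - G` has derivative of norm at most `C` on the convex set `K`, so by the mean
value inequality it is `C`-Lipschitz there, and `‖F x - F x'‖ ≤ ‖G x - G x'‖ + C ‖x - x'‖`.
Inserting this into the stability estimate of `F` gives `(1 - S C) ‖x - x'‖ ≤ S ‖G x - G x'‖`;
for `C = 1/(2S)` the factor `1 - S C` is `1/2`.
-/

namespace Convex

variable {E Y : Type*} [NormedAddCommGroup E] [NormedSpace ℝ E]
  [NormedAddCommGroup Y] [NormedSpace ℝ Y] {K : Set E} {F G : E → Y} {C : ℝ}

theorem norm_image_sub_le_add_of_norm_fderiv_sub_le (hK : Convex ℝ K)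
    (hF : ∀ x ∈ K, DifferentiableAt ℝ F x) (hG : ∀ x ∈ K, DifferentiableAt ℝ G x)
    (hclose : ∀ x ∈ K, ‖fderiv ℝ F x - fderiv ℝ G x‖ ≤ C) {x x' : E} (hx : x ∈ K)
    (hx' : x' ∈ K) : ‖F x - F x'‖ ≤ ‖G x - G x'‖ + C * ‖x - x'‖ := by
  have hlip : ‖(F x - G x) - (F x' - G x')‖ ≤ C * ‖x - x'‖ :=
    hK.norm_image_sub_le_of_norm_fderiv_le (f := fun y => F y - G y)
      (fun z hz => (hF z hz).sub (hG z hz))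
      (fun z hz => by rw [fderiv_fun_sub (hF z hz) (hG z hz)]; exact hclose z hz) hx' hx
  calc ‖F x - F x'‖ = ‖(G x - G x') + ((F x - G x) - (F x' - G x'))‖ := by abel_nf
    _ ≤ ‖G x - G x'‖ + ‖(F x - G x) - (F x' - G x')‖ := norm_add_le _ _
    _ ≤ ‖G x - G x'‖ + C * ‖x - x'‖ := by gcongr

theorem norm_sub_le_of_stable_of_norm_fderiv_sub_le (hK : Convex ℝ K)
    (hF : ∀ x ∈ K, DifferentiableAt ℝ F x) (hG : ∀ x ∈ K, DifferentiableAt ℝ G x)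
    {S : ℝ} (hS : 0 ≤ S) (hSC : S * C < 1)
    (hstab : ∀ x ∈ K, ∀ x' ∈ K, ‖x - x'‖ ≤ S * ‖F x - F x'‖)
    (hclose : ∀ x ∈ K, ‖fderiv ℝ F x - fderiv ℝ G x‖ ≤ C) :
    ∀ x ∈ K, ∀ x' ∈ K, ‖x - x'‖ ≤ S / (1 - S * C) * ‖G x - G x'‖ := by
  intro x hx x' hx'
  have hperturb : ‖x - x'‖ ≤ S * (‖G x - G x'‖ + C * ‖x - x'‖) :=
    (hstab x hx x' hx').trans <| mul_le_mul_of_nonneg_left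
      (hK.norm_image_sub_le_add_of_norm_fderiv_sub_le hF hG hclose hx hx') hS
  rw [div_mul_eq_mul_div, le_div_iff₀ (by linarith)]
  linarith

end Convex

/-- The nonlinear perturbed-stability argument (variant of Theorem 2(ii) of
Alberti–Santacesaria) used for estimate (4.3) in Theorem 3.4(ii): if `F` is stable
with constant `S` on a convex set `K` and the derivatives of `F` and `G` differ by
at most `1/(2S)` in operator norm on `K`, then `G` is stable with constant `2S`
on `K`. -/
theorem stmt7 {E Y : Type*} [NormedAddCommGroup E] [NormedSpace ℝ E]
    [NormedAddCommGroup Y] [NormedSpace ℝ Y]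
    (K : Set E) (hKconv : Convex ℝ K)
    (F G : E → Y) (hF : Differentiable ℝ F) (hG : Differentiable ℝ G)
    (S : ℝ) (hS : 0 < S)
    (hstab : ∀ x ∈ K, ∀ x' ∈ K, ‖x - x'‖ ≤ S * ‖F x - F x'‖)
    (hclose : ∀ x ∈ K, ‖fderiv ℝ F x - fderiv ℝ G x‖ ≤ 1 / (2 * S)) :
    ∀ x ∈ K, ∀ x' ∈ K, ‖x - x'‖ ≤ 2 * S * ‖G x - G x'‖ := by
  have hSC : S * (1 / (2 * S)) = 1 / 2 := by field_simp
  have hconst : S / (1 - S * (1 / (2 * S))) = 2 * S := by rw [hSC]; ring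
  rw [← hconst]
  exact hKconv.norm_sub_le_of_stable_of_norm_fderiv_sub_le (fun x _ => hF x) (fun x _ => hG x)
    hS.le (by rw [hSC]; norm_num) hstab hclose
end

section
/- Consider the random-design Gaussian regression model: let (X, 𝔄, λ) be a probability space, let m and D be natural numbers, let Θ ⊆ ℝ^D, and for each θ ∈ Θ let G_θ : X → ℝ^m be measurable; the model density with respect to (Lebesgue measure on ℝ^m) ⊗ λ is p_θ(y,x) = (2π)^{−m/2} exp(−‖y − G_θ(x)‖²/2), where ‖·‖ and ⟨·,·⟩ denote the Euclidean norm and inner product on ℝ^m. Let θ₀ be an interior point of Θ and assume U := sup_{θ∈Θ} sup_{x∈X} ‖G_θ(x)‖ < ∞. Let I₀ : ℝ^D → (X → ℝ^m) be a linear map such that x ↦ I₀[h](x) is measurable for every h ∈ ℝ^D, and assume: (i) for every x ∈ X, ‖G_{θ₀+h}(x) − G_{θ₀}(x) − I₀[h](x)‖ = o(‖h‖) as h → 0 in ℝ^D; (ii) there exist ε, B > 0 such that sup_{x∈X} ‖G_{θ₀+h}(x) − G_{θ₀}(x)‖ ≤ B‖h‖ whenever ‖h‖ < ε and θ₀ +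 h ∈ Θ. Define the score A[h](y,x) := ⟨y − G_{θ₀}(x), I₀[h](x)⟩. Then, as h → 0 in ℝ^D, ∫_X ∫_{ℝ^m} ( p_{θ₀+h}(y,x)^{1/2} − p_{θ₀}(y,x)^{1/2} − (1/2) A[h](y,x) · p_{θ₀}(y,x)^{1/2} )² dy dλ(x) = o(‖h‖²). -/
open MeasureTheory Filter Asymptotics Topology
open scoped RealInnerProductSpace

lemma stmt8_exp_taylor (w : ℝ) : |Real.exp w - 1 - w| ≤ w ^ 2 * Real.exp |w| := by
  have hE : 0 ≤ Real.exp w - 1 - w := by nlinarith [Real.add_one_le_exp w]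
  have hexp1 : (1:ℝ) ≤ Real.exp |w| := Real.one_le_exp (abs_nonneg w)
  rw [abs_of_nonneg hE]
  rcases le_or_gt |w| 1 with h | h
  · have h3 : Real.exp w - 1 - w ≤ w ^ 2 := le_of_abs_le (Real.abs_exp_sub_one_sub_id_le h)
    nlinarith [sq_nonneg w]
  · rcases le_or_gt 0 w with hw | hw
    · have hw1 : 1 < w := by rwa [abs_of_nonneg hw] at h
      have h2 : Real.exp w ≤ Real.exp |w| := Real.exp_le_exp.2 (le_abs_self w)
      have hA : w^2 * Real.exp w ≤ w^2 * Real.exp |w| :=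
        mul_le_mul_of_nonneg_left h2 (sq_nonneg w)
      have h4 : (0:ℝ) ≤ (w^2 - 1) * Real.exp w :=
        mul_nonneg (by nlinarith) (Real.exp_pos w).le
      nlinarith [Real.exp_pos w]
    · have hw1 : 1 < -w := by rwa [abs_of_neg hw] at h
      have hexpw : Real.exp w ≤ 1 := Real.exp_le_one_iff.2 hw.le
      nlinarith

noncomputable def stmt8gg (m : ℕ) (z : EuclideanSpace ℝ (Fin m)) : ℝ :=
  (‖z‖ + 1) ^ 4 * Real.exp (2 * (‖z‖ + 1)) *
    ((2 * Real.pi) ^ (-(m : ℝ) / 2) * Real.exp (-‖z‖ ^ 2 / 2))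

lemma stmt8gg_nonneg (m : ℕ) (z : EuclideanSpace ℝ (Fin m)) : 0 ≤ stmt8gg m z := by
  have h2π : (0:ℝ) < 2 * Real.pi := Real.two_pi_pos
  unfold stmt8gg
  positivity

lemma stmt8gg_integrable (m : ℕ) : Integrable (stmt8gg m) := by
  have base : Integrable (fun z : EuclideanSpace ℝ (Fin m) => Real.exp (-(1/4:ℝ) * ‖z‖^2)) := by
    have h := (GaussianFourier.integrable_cexp_neg_mul_sq_norm_add
      (V := EuclideanSpace ℝ (Fin m)) (b := (1/4 : ℂ)) (by norm_num) 0 0).norm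
    simpa [Complex.norm_exp, ← Complex.ofReal_pow] using h
  have hc : 0 < (2 * Real.pi) ^ (-(m : ℝ) / 2) := Real.rpow_pos_of_pos Real.two_pi_pos _
  refine (base.const_mul ((2 * Real.pi) ^ (-(m : ℝ) / 2) * Real.exp 42)).mono'
    ?_ (Eventually.of_forall fun z => ?_)
  · apply Continuous.aestronglyMeasurable
    unfold stmt8gg
    fun_prop
  · have hr : (0:ℝ) ≤ ‖z‖ := norm_nonneg z
    set r := ‖z‖ with hrdef
    have h1a : r + 1 ≤ Real.exp (r + 1) := by nlinarith [Real.add_one_le_exp (r + 1)]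
    have h1 : (r + 1) ^ 4 ≤ Real.exp (4 * (r + 1)) := by
      calc (r + 1) ^ 4 ≤ (Real.exp (r + 1)) ^ 4 := by
            exact pow_le_pow_left₀ (by positivity) h1a 4
        _ = Real.exp (4 * (r + 1)) := by
            rw [show (4:ℝ) * (r+1) = (4:ℕ) * (r+1) by norm_num, Real.exp_nat_mul]
    have h3 : 6*r + 6 - r^2/2 ≤ 42 + (-(1/4:ℝ)*r^2) := by nlinarith [sq_nonneg (r - 12)]
    have key : (r+1)^4 * Real.exp (2*(r+1)) * Real.exp (-r^2/2)
        ≤ Real.exp 42 * Real.exp (-(1/4:ℝ)*r^2) := by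
      calc (r+1)^4 * Real.exp (2*(r+1)) * Real.exp (-r^2/2)
          ≤ Real.exp (4*(r+1)) * Real.exp (2*(r+1)) * Real.exp (-r^2/2) := by
            have := Real.exp_pos (2*(r+1)); have := Real.exp_pos (-r^2/2)
            apply mul_le_mul_of_nonneg_right (mul_le_mul_of_nonneg_right h1 (by positivity))
              (by positivity)
        _ = Real.exp (6*r + 6 - r^2/2) := by rw [← Real.exp_add, ← Real.exp_add]; ring_nf
        _ ≤ Real.exp 42 * Real.exp (-(1/4:ℝ)*r^2) := by
            rw [← Real.exp_add]; exact Real.exp_le_exp.2 h3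
    have hnn := stmt8gg_nonneg m z
    rw [Real.norm_of_nonneg hnn]
    unfold stmt8gg
    rw [← hrdef]
    calc (r + 1) ^ 4 * Real.exp (2 * (r + 1)) *
          ((2 * Real.pi) ^ (-(m : ℝ) / 2) * Real.exp (-r ^ 2 / 2))
        = (2 * Real.pi) ^ (-(m : ℝ) / 2) *
            ((r+1)^4 * Real.exp (2*(r+1)) * Real.exp (-r^2/2)) := by ring
      _ ≤ (2 * Real.pi) ^ (-(m : ℝ) / 2) * (Real.exp 42 * Real.exp (-(1/4:ℝ)*r^2)) :=
          mul_le_mul_of_nonneg_left key hc.le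
      _ = (2 * Real.pi) ^ (-(m : ℝ) / 2) * Real.exp 42 * Real.exp (-(1/4:ℝ)*‖z‖^2) := by
          rw [hrdef]; ring

set_option maxHeartbeats 800000 in
lemma stmt8_Q_bound (r δ ndv zid ziv zidv : ℝ) (hr : 0 ≤ r) (hδ0 : 0 ≤ δ) (hδ1 : δ ≤ 1)
    (hndv : 0 ≤ ndv) (hzid : |zid| ≤ r * δ) (hzidv : |zidv| ≤ r * ndv)
    (hsplit : zidv = zid - ziv) :
    (Real.exp (zid / 2 - δ ^ 2 / 4) - 1 - 1 / 2 * ziv) ^ 2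
      ≤ (6 * δ ^ 4 + 3 / 4 * ndv ^ 2) * ((r + 1) ^ 4 * Real.exp (2 * (r + 1))) := by
  set w : ℝ := zid / 2 - δ ^ 2 / 4 with hwdef
  set K : ℝ := (r + 1) ^ 4 * Real.exp (2 * (r + 1)) with hKdef
  have hK1 : (1:ℝ) ≤ K := by
    have h1 : (1:ℝ) ≤ (r + 1) ^ 4 := one_le_pow₀ (by linarith)
    have h2 : (1:ℝ) ≤ Real.exp (2 * (r + 1)) := Real.one_le_exp (by linarith)
    nlinarith
  set α : ℝ := Real.exp w - 1 - w with hαdef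
  have hQsplit : Real.exp (zid / 2 - δ ^ 2 / 4) - 1 - 1 / 2 * ziv
      = α + zidv / 2 + -(δ ^ 2) / 4 := by
    rw [hαdef, hsplit, hwdef]; ring
  have hzid' := abs_le.1 hzid
  have hδ2 : δ ^ 2 ≤ δ := by nlinarith
  have hwabs : |w| ≤ δ * (r + 1) := by
    rw [hwdef, abs_le]
    constructor
    · nlinarith [hzid'.1]
    · nlinarith [hzid'.2]
  have hwr : |w| ≤ r + 1 := hwabs.trans (by nlinarith)
  have hα2 : α ^ 2 ≤ δ ^ 4 * K := by
    have h1 : |α| ≤ w ^ 2 * Real.exp |w| := stmt8_exp_taylor w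
    have h2 : α ^ 2 ≤ (w ^ 2 * Real.exp |w|) ^ 2 := by
      rw [← sq_abs α]; exact pow_le_pow_left₀ (abs_nonneg α) h1 2
    have h3 : w ^ 2 ≤ (δ * (r + 1)) ^ 2 := by
      rw [← sq_abs w]; exact pow_le_pow_left₀ (abs_nonneg w) hwabs 2
    have h4 : Real.exp |w| ≤ Real.exp (r + 1) := Real.exp_le_exp.2 hwr
    have h5 : (w ^ 2 * Real.exp |w|) ^ 2 ≤ ((δ * (r + 1)) ^ 2) ^ 2 * Real.exp (r + 1) ^ 2 := by
      rw [mul_pow]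
      exact mul_le_mul (pow_le_pow_left₀ (sq_nonneg w) h3 2)
        (pow_le_pow_left₀ (Real.exp_pos _).le h4 2) (by positivity) (by positivity)
    have hexp2 : Real.exp (r + 1) ^ 2 = Real.exp (2 * (r + 1)) := by
      rw [sq, ← Real.exp_add]; ring_nf
    have h6 : ((δ * (r + 1)) ^ 2) ^ 2 * Real.exp (r + 1) ^ 2 = δ ^ 4 * K := by
      rw [hexp2, hKdef]; ring
    linarith
  have hβ2 : (zidv / 2) ^ 2 ≤ ndv ^ 2 / 4 * K := by
    have h2 : zidv ^ 2 ≤ r ^ 2 * ndv ^ 2 := by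
      rw [← sq_abs zidv]
      calc |zidv| ^ 2 ≤ (r * ndv) ^ 2 := pow_le_pow_left₀ (abs_nonneg _) hzidv 2
        _ = r ^ 2 * ndv ^ 2 := by ring
    have h3 : r ^ 2 ≤ K := by
      have e1 : r ^ 2 ≤ (r + 1) ^ 4 := by nlinarith
      have e2 : (1:ℝ) ≤ Real.exp (2 * (r + 1)) := Real.one_le_exp (by linarith)
      rw [hKdef]; nlinarith
    have h4 : zidv ^ 2 ≤ K * ndv ^ 2 := by
      calc zidv ^ 2 ≤ r ^ 2 * ndv ^ 2 := h2
        _ ≤ K * ndv ^ 2 := mul_le_mul_of_nonneg_right h3 (sq_nonneg ndv)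
    have h5 : (zidv / 2) ^ 2 = zidv ^ 2 / 4 := by ring
    rw [h5]; linarith
  have hγ2 : (-(δ ^ 2) / 4) ^ 2 ≤ δ ^ 4 * K := by nlinarith [pow_nonneg hδ0 4]
  clear_value w K α
  rw [hwdef, hQsplit]
  have h1 : (α + zidv / 2 + -(δ ^ 2) / 4) ^ 2
      ≤ 3 * (α ^ 2 + (zidv / 2) ^ 2 + (-(δ ^ 2) / 4) ^ 2) := by
    nlinarith [sq_nonneg (α - zidv / 2), sq_nonneg (zidv / 2 - -(δ ^ 2) / 4),
      sq_nonneg (α - -(δ ^ 2) / 4)]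
  nlinarith [hα2, hβ2, hγ2, h1]

lemma stmt8_pointwise {m : ℕ} (a b v y : EuclideanSpace ℝ (Fin m)) (hd : ‖b - a‖ ≤ 1) :
    (Real.sqrt ((2 * Real.pi) ^ (-(m : ℝ) / 2) * Real.exp (-‖y - b‖ ^ 2 / 2))
      - Real.sqrt ((2 * Real.pi) ^ (-(m : ℝ) / 2) * Real.exp (-‖y - a‖ ^ 2 / 2))
      - 1 / 2 * ⟪y - a, v⟫ *
        Real.sqrt ((2 * Real.pi) ^ (-(m : ℝ) / 2) * Real.exp (-‖y - a‖ ^ 2 / 2))) ^ 2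
    ≤ (6 * ‖b - a‖ ^ 4 + 3 / 4 * ‖b - a - v‖ ^ 2) * stmt8gg m (y - a) := by
  have hc : (0:ℝ) < (2 * Real.pi) ^ (-(m : ℝ) / 2) := Real.rpow_pos_of_pos Real.two_pi_pos _
  set c : ℝ := (2 * Real.pi) ^ (-(m : ℝ) / 2) with hcdef
  have hsq : ∀ t : ℝ, Real.sqrt (c * Real.exp t) = Real.sqrt c * Real.exp (t / 2) := by
    intro t
    rw [Real.sqrt_mul hc.le, Real.exp_half]
  have hyb : y - b = (y - a) - (b - a) := by abel
  have hnormb : ‖y - b‖ ^ 2 = ‖y - a‖ ^ 2 - 2 * ⟪y - a, b - a⟫ + ‖b - a‖ ^ 2 := by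
    rw [hyb]; exact norm_sub_sq_real (y - a) (b - a)
  have e1 : -‖y - b‖ ^ 2 / 2 / 2
      = -‖y - a‖ ^ 2 / 2 / 2 + (⟪y - a, b - a⟫ / 2 - ‖b - a‖ ^ 2 / 4) := by
    rw [hnormb]; ring
  have e3 : Real.exp (-‖y - a‖ ^ 2 / 2 / 2) ^ 2 = Real.exp (-‖y - a‖ ^ 2 / 2) := by
    rw [sq, ← Real.exp_add]; congr 1; ring
  have e4 : Real.sqrt c ^ 2 = c := Real.sq_sqrt hc.le
  have hfact :
      (Real.sqrt (c * Real.exp (-‖y - b‖ ^ 2 / 2))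
        - Real.sqrt (c * Real.exp (-‖y - a‖ ^ 2 / 2))
        - 1 / 2 * ⟪y - a, v⟫ * Real.sqrt (c * Real.exp (-‖y - a‖ ^ 2 / 2))) ^ 2
      = (c * Real.exp (-‖y - a‖ ^ 2 / 2)) *
          (Real.exp (⟪y - a, b - a⟫ / 2 - ‖b - a‖ ^ 2 / 4) - 1 - 1 / 2 * ⟪y - a, v⟫) ^ 2 := by
    rw [hsq, hsq, e1, Real.exp_add]
    linear_combination
      (Real.exp (⟪y - a, b - a⟫ / 2 - ‖b - a‖ ^ 2 / 4) - 1 - 1 / 2 * ⟪y - a, v⟫) ^ 2 *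
        (Real.exp (-‖y - a‖ ^ 2 / 2 / 2)) ^ 2 * e4 +
      (Real.exp (⟪y - a, b - a⟫ / 2 - ‖b - a‖ ^ 2 / 4) - 1 - 1 / 2 * ⟪y - a, v⟫) ^ 2 * c * e3
  rw [hfact]
  have hsplit : ⟪y - a, b - a - v⟫ = ⟪y - a, b - a⟫ - ⟪y - a, v⟫ :=
    inner_sub_right (y - a) (b - a) v
  have hQ := stmt8_Q_bound ‖y - a‖ ‖b - a‖ ‖b - a - v‖ ⟪y - a, b - a⟫ ⟪y - a, v⟫
    ⟪y - a, b - a - v⟫ (norm_nonneg _) (norm_nonneg _) hd (norm_nonneg _)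
    (by simpa using abs_real_inner_le_norm (y - a) (b - a))
    (by simpa using abs_real_inner_le_norm (y - a) (b - a - v)) hsplit
  calc (c * Real.exp (-‖y - a‖ ^ 2 / 2)) *
        (Real.exp (⟪y - a, b - a⟫ / 2 - ‖b - a‖ ^ 2 / 4) - 1 - 1 / 2 * ⟪y - a, v⟫) ^ 2
      ≤ (c * Real.exp (-‖y - a‖ ^ 2 / 2)) *
          ((6 * ‖b - a‖ ^ 4 + 3 / 4 * ‖b - a - v‖ ^ 2) *
            ((‖y - a‖ + 1) ^ 4 * Real.exp (2 * (‖y - a‖ + 1)))) :=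
        mul_le_mul_of_nonneg_left hQ (by positivity)
    _ = (6 * ‖b - a‖ ^ 4 + 3 / 4 * ‖b - a - v‖ ^ 2) * stmt8gg m (y - a) := by
        unfold stmt8gg; ring

lemma stmt8_inner_bound {m : ℕ} (a b v : EuclideanSpace ℝ (Fin m)) (hd : ‖b - a‖ ≤ 1) :
    ∫ y : EuclideanSpace ℝ (Fin m),
      (Real.sqrt ((2 * Real.pi) ^ (-(m : ℝ) / 2) * Real.exp (-‖y - b‖ ^ 2 / 2))
        - Real.sqrt ((2 * Real.pi) ^ (-(m : ℝ) / 2) * Real.exp (-‖y - a‖ ^ 2 / 2))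
        - 1 / 2 * ⟪y - a, v⟫ *
          Real.sqrt ((2 * Real.pi) ^ (-(m : ℝ) / 2) * Real.exp (-‖y - a‖ ^ 2 / 2))) ^ 2
    ≤ (6 * ‖b - a‖ ^ 4 + 3 / 4 * ‖b - a - v‖ ^ 2) * ∫ z, stmt8gg m z := by
  have hint : Integrable (fun y : EuclideanSpace ℝ (Fin m) =>
      (6 * ‖b - a‖ ^ 4 + 3 / 4 * ‖b - a - v‖ ^ 2) * stmt8gg m (y - a)) :=
    ((stmt8gg_integrable m).comp_sub_right a).const_mul _
  calc ∫ y : EuclideanSpace ℝ (Fin m),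
        (Real.sqrt ((2 * Real.pi) ^ (-(m : ℝ) / 2) * Real.exp (-‖y - b‖ ^ 2 / 2))
          - Real.sqrt ((2 * Real.pi) ^ (-(m : ℝ) / 2) * Real.exp (-‖y - a‖ ^ 2 / 2))
          - 1 / 2 * ⟪y - a, v⟫ *
            Real.sqrt ((2 * Real.pi) ^ (-(m : ℝ) / 2) * Real.exp (-‖y - a‖ ^ 2 / 2))) ^ 2
      ≤ ∫ y : EuclideanSpace ℝ (Fin m),
          (6 * ‖b - a‖ ^ 4 + 3 / 4 * ‖b - a - v‖ ^ 2) * stmt8gg m (y - a) := by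
        apply integral_mono_of_nonneg (Eventually.of_forall fun y => sq_nonneg _) hint
        exact Eventually.of_forall fun y => stmt8_pointwise a b v y hd
    _ = (6 * ‖b - a‖ ^ 4 + 3 / 4 * ‖b - a - v‖ ^ 2) * ∫ y, stmt8gg m (y - a) :=
        integral_const_mul _ _
    _ = (6 * ‖b - a‖ ^ 4 + 3 / 4 * ‖b - a - v‖ ^ 2) * ∫ z, stmt8gg m z := by
        rw [integral_sub_right_eq_self (stmt8gg m) a]

set_option maxHeartbeats 1000000 in
/-- Proposition 4.1 (differentiability in quadratic mean of the random-design Gaussian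
regression experiment): with densities
`p θ (y,x) = (2π)^{-m/2} exp(-‖y - G θ x‖²/2)` w.r.t. Lebesgue ⊗ λ, a uniformly bounded
forward map `G` that is differentiable at the interior point `θ₀` with derivative `I₀`
and locally Lipschitz near `θ₀` satisfies, with the score
`A h (y,x) = ⟪y - G θ₀ x, I₀ h x⟫`,
`∫∫ (√p_{θ₀+h} - √p_{θ₀} - ½ A[h] √p_{θ₀})² dy dλ = o(‖h‖²)` as `h → 0`. -/
theorem stmt8 {X : Type*} [MeasurableSpace X] (lam : Measure X)
    [IsProbabilityMeasure lam] (m D : ℕ)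
    (Θ : Set (EuclideanSpace ℝ (Fin D)))
    (G : EuclideanSpace ℝ (Fin D) → X → EuclideanSpace ℝ (Fin m))
    (hGmeas : ∀ θ ∈ Θ, Measurable (G θ))
    (p : EuclideanSpace ℝ (Fin D) → EuclideanSpace ℝ (Fin m) → X → ℝ)
    (hp : ∀ θ y x, p θ y x =
      (2 * Real.pi) ^ (-(m : ℝ) / 2) * Real.exp (-‖y - G θ x‖ ^ 2 / 2))
    (θ₀ : EuclideanSpace ℝ (Fin D)) (hθ₀ : θ₀ ∈ interior Θ)
    (U : ℝ) (hU : ∀ θ ∈ Θ, ∀ x : X, ‖G θ x‖ ≤ U)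
    (I₀ : EuclideanSpace ℝ (Fin D) →ₗ[ℝ] (X → EuclideanSpace ℝ (Fin m)))
    (hI₀meas : ∀ h, Measurable (I₀ h))
    (hdiff : ∀ x : X,
      (fun h : EuclideanSpace ℝ (Fin D) => G (θ₀ + h) x - G θ₀ x - I₀ h x)
        =o[𝓝 0] fun h => h)
    (ε B : ℝ) (hε : 0 < ε) (hB : 0 < B)
    (hlip : ∀ h : EuclideanSpace ℝ (Fin D), ‖h‖ < ε → θ₀ + h ∈ Θ →
      ∀ x : X, ‖G (θ₀ + h) x - G θ₀ x‖ ≤ B * ‖h‖)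
    (A : EuclideanSpace ℝ (Fin D) → EuclideanSpace ℝ (Fin m) → X → ℝ)
    (hA : ∀ h y x, A h y x = ⟪y - G θ₀ x, I₀ h x⟫) :
    (fun h : EuclideanSpace ℝ (Fin D) =>
        ∫ x, ∫ y,
          (Real.sqrt (p (θ₀ + h) y x) - Real.sqrt (p θ₀ y x)
            - (1 / 2) * A h y x * Real.sqrt (p θ₀ y x)) ^ 2
          ∂(volume : Measure (EuclideanSpace ℝ (Fin m))) ∂lam)
      =o[𝓝 0] fun h => ‖h‖ ^ 2 := by
  have hθΘ : θ₀ ∈ Θ := interior_subset hθ₀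
  -- eventually θ₀ + h ∈ Θ
  have hnbhd : ∀ᶠ h in 𝓝 (0 : EuclideanSpace ℝ (Fin D)), θ₀ + h ∈ Θ := by
    have hcont : Continuous fun h : EuclideanSpace ℝ (Fin D) => θ₀ + h :=
      continuous_const.add continuous_id
    have h0 : interior Θ ∈ 𝓝 (θ₀ + 0) := by
      rw [add_zero]; exact isOpen_interior.mem_nhds hθ₀
    exact ((hcont.tendsto 0).eventually_mem h0).mono fun h hh => interior_subset hh
  have hballε : ∀ᶠ h in 𝓝 (0 : EuclideanSpace ℝ (Fin D)), ‖h‖ < ε := by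
    filter_upwards [Metric.ball_mem_nhds (0 : EuclideanSpace ℝ (Fin D)) hε] with h hh
    exact mem_ball_zero_iff.1 hh
  have hballB : ∀ᶠ h in 𝓝 (0 : EuclideanSpace ℝ (Fin D)), B * ‖h‖ ≤ 1 := by
    filter_upwards [Metric.ball_mem_nhds (0 : EuclideanSpace ℝ (Fin D))
      (show (0:ℝ) < 1 / B by positivity)] with h hh
    have := mem_ball_zero_iff.1 hh
    rw [lt_div_iff₀ hB] at this
    nlinarith
  -- uniform bound on I₀
  have hv : ∀ (h : EuclideanSpace ℝ (Fin D)) (x : X), ‖I₀ h x‖ ≤ B * ‖h‖ := by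
    intro h x
    rcases eq_or_ne h 0 with rfl | hne
    · simp
    · have hn0 : (0:ℝ) < ‖h‖ := norm_pos_iff.2 hne
      refine le_of_forall_pos_le_add fun c hc => ?_
      have hc' : 0 < c / ‖h‖ := div_pos hc hn0
      have h1 := (hdiff x).def hc'
      have h3 := hnbhd.and (h1.and hballε)
      have htend : Tendsto (fun t : ℝ => t • h) (𝓝[>] (0:ℝ))
          (𝓝 (0 : EuclideanSpace ℝ (Fin D))) := by
        apply Tendsto.mono_left _ nhdsWithin_le_nhds
        have h5 : Tendsto (fun t : ℝ => t • h) (𝓝 0) (𝓝 ((0:ℝ) • h)) :=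
          (continuous_id.smul continuous_const).tendsto 0
        simpa using h5
      obtain ⟨t, ⟨hmemΘ, hle, hsmall⟩, ht0⟩ := ((htend.eventually h3).and
        eventually_mem_nhdsWithin).exists
      have ht : (0:ℝ) < t := ht0
      have e1 : I₀ (t • h) x = t • I₀ h x := by rw [I₀.map_smul]; rfl
      have key : t * ‖I₀ h x‖ ≤ t * (B * ‖h‖ + c) := by
        have lip := hlip (t • h) hsmall hmemΘ x
        have edec : I₀ (t • h) x = (G (θ₀ + t • h) x - G θ₀ x) -
            (G (θ₀ + t • h) x - G θ₀ x - I₀ (t • h) x) := by abel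
        calc t * ‖I₀ h x‖ = ‖I₀ (t • h) x‖ := by
              rw [e1, norm_smul, Real.norm_eq_abs, abs_of_pos ht]
          _ = ‖(G (θ₀ + t • h) x - G θ₀ x) -
              (G (θ₀ + t • h) x - G θ₀ x - I₀ (t • h) x)‖ := congrArg norm edec
          _ ≤ ‖G (θ₀ + t • h) x - G θ₀ x‖ +
              ‖G (θ₀ + t • h) x - G θ₀ x - I₀ (t • h) x‖ := norm_sub_le _ _
          _ ≤ B * ‖t • h‖ + c / ‖h‖ * ‖t • h‖ := add_le_add lip hle
          _ = t * (B * ‖h‖ + c) := by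
              rw [norm_smul, Real.norm_eq_abs, abs_of_pos ht]
              field_simp
      exact le_of_mul_le_mul_left key ht
  -- nonnegativity of C
  have hC0 : (0:ℝ) ≤ ∫ z, stmt8gg m z := integral_nonneg (stmt8gg_nonneg m)
  -- J is little-o of ‖h‖²
  have hJo : (fun h : EuclideanSpace ℝ (Fin D) =>
      ∫ x, ‖G (θ₀ + h) x - G θ₀ x - I₀ h x‖ ^ 2 ∂lam) =o[𝓝 0] fun h => ‖h‖ ^ 2 := by
    have hmeas : ∀ᶠ h in 𝓝 (0 : EuclideanSpace ℝ (Fin D)), AEStronglyMeasurable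
        (fun x => ‖G (θ₀ + h) x - G θ₀ x - I₀ h x‖ ^ 2 / ‖h‖ ^ 2) lam := by
      filter_upwards [hnbhd] with h hh
      exact (((((hGmeas _ hh).sub (hGmeas _ hθΘ)).sub (hI₀meas h)).norm.pow_const
        2).div_const _).aestronglyMeasurable
    have hbdd : ∀ᶠ h in 𝓝 (0 : EuclideanSpace ℝ (Fin D)), ∀ᵐ x ∂lam,
        ‖‖G (θ₀ + h) x - G θ₀ x - I₀ h x‖ ^ 2 / ‖h‖ ^ 2‖ ≤ (2 * B) ^ 2 := by
      filter_upwards [hnbhd, hballε] with h hhΘ hhε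
      refine Eventually.of_forall fun x => ?_
      rcases eq_or_ne h 0 with rfl | hne
      · have hz : ‖G (θ₀ + 0) x - G θ₀ x - I₀ 0 x‖ ^ 2 /
            ‖(0 : EuclideanSpace ℝ (Fin D))‖ ^ 2 = 0 := by
          simp [map_zero]
        rw [hz, norm_zero]
        positivity
      · have hn0 : (0:ℝ) < ‖h‖ := norm_pos_iff.2 hne
        have hdv : ‖G (θ₀ + h) x - G θ₀ x - I₀ h x‖ ≤ 2 * B * ‖h‖ := by
          calc ‖G (θ₀ + h) x - G θ₀ x - I₀ h x‖
              ≤ ‖G (θ₀ + h) x - G θ₀ x‖ + ‖I₀ h x‖ := norm_sub_le _ _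
            _ ≤ B * ‖h‖ + B * ‖h‖ := add_le_add (hlip h hhε hhΘ x) (hv h x)
            _ = 2 * B * ‖h‖ := by ring
        rw [Real.norm_of_nonneg (by positivity), div_le_iff₀ (by positivity)]
        calc ‖G (θ₀ + h) x - G θ₀ x - I₀ h x‖ ^ 2 ≤ (2 * B * ‖h‖) ^ 2 :=
              pow_le_pow_left₀ (norm_nonneg _) hdv 2
          _ = (2 * B) ^ 2 * ‖h‖ ^ 2 := by ring
    have hlim : ∀ᵐ x ∂lam, Tendsto
        (fun h : EuclideanSpace ℝ (Fin D) =>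
          ‖G (θ₀ + h) x - G θ₀ x - I₀ h x‖ ^ 2 / ‖h‖ ^ 2) (𝓝 0) (𝓝 0) := by
      refine Eventually.of_forall fun x => ?_
      have h1 : (fun h : EuclideanSpace ℝ (Fin D) => ‖G (θ₀ + h) x - G θ₀ x - I₀ h x‖)
          =o[𝓝 0] fun h => ‖h‖ := (hdiff x).norm_norm
      exact (h1.pow two_pos).tendsto_div_nhds_zero
    have hDCT : Tendsto (fun h : EuclideanSpace ℝ (Fin D) =>
        ∫ x, ‖G (θ₀ + h) x - G θ₀ x - I₀ h x‖ ^ 2 / ‖h‖ ^ 2 ∂lam) (𝓝 0)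
        (𝓝 (∫ _x, (0:ℝ) ∂lam)) :=
      tendsto_integral_filter_of_dominated_convergence _ hmeas hbdd (integrable_const _) hlim
    rw [integral_zero] at hDCT
    rw [isLittleO_iff]
    intro c hc
    filter_upwards [Metric.tendsto_nhds.mp hDCT c hc, hnbhd] with h hdist hhΘ
    rcases eq_or_ne h 0 with rfl | hne
    · have : ∀ x : X, ‖G (θ₀ + 0) x - G θ₀ x - I₀ 0 x‖ ^ 2 = 0 := by
        intro x
        simp only [add_zero, map_zero]
        have : G θ₀ x - G θ₀ x - (0 : X → EuclideanSpace ℝ (Fin m)) x = 0 := by simp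
        rw [this]; simp
      simp only [this, integral_zero, norm_zero]
      simp
    · have hpos : (0:ℝ) < ‖h‖ ^ 2 := pow_pos (norm_pos_iff.2 hne) 2
      have heq : ∫ x, ‖G (θ₀ + h) x - G θ₀ x - I₀ h x‖ ^ 2 ∂lam
          = ‖h‖ ^ 2 * ∫ x, ‖G (θ₀ + h) x - G θ₀ x - I₀ h x‖ ^ 2 / ‖h‖ ^ 2 ∂lam := by
        rw [← integral_const_mul]
        congr 1
        funext x
        field_simp
      rw [heq]
      rw [Real.dist_eq, sub_zero] at hdist
      rw [Real.norm_eq_abs, abs_mul, abs_of_nonneg hpos.le,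
        Real.norm_of_nonneg (sq_nonneg ‖h‖)]
      calc ‖h‖ ^ 2 * |∫ x, ‖G (θ₀ + h) x - G θ₀ x - I₀ h x‖ ^ 2 / ‖h‖ ^ 2 ∂lam|
          ≤ ‖h‖ ^ 2 * c := mul_le_mul_of_nonneg_left hdist.le hpos.le
        _ = c * ‖h‖ ^ 2 := by ring
  -- ‖h‖⁴ is little-o of ‖h‖²
  have h4o : (fun h : EuclideanSpace ℝ (Fin D) => ‖h‖ ^ 4) =o[𝓝 0]
      fun h => ‖h‖ ^ 2 := by
    rw [isLittleO_iff]
    intro c hc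
    filter_upwards [Metric.ball_mem_nhds (0 : EuclideanSpace ℝ (Fin D))
      (show (0:ℝ) < min 1 c by positivity)] with h hh
    rw [mem_ball_zero_iff] at hh
    have h1 : ‖h‖ < 1 := lt_of_lt_of_le hh (min_le_left _ _)
    have h2 : ‖h‖ < c := lt_of_lt_of_le hh (min_le_right _ _)
    rw [Real.norm_of_nonneg (by positivity), Real.norm_of_nonneg (by positivity)]
    have h3 : ‖h‖ ^ 2 ≤ c := by nlinarith [norm_nonneg h]
    have h4 : ‖h‖ ^ 4 = ‖h‖ ^ 2 * ‖h‖ ^ 2 := by ring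
    rw [h4]
    exact mul_le_mul_of_nonneg_right h3 (sq_nonneg _)
  -- assemble
  simp only [hp, hA]
  have hψo : (fun h : EuclideanSpace ℝ (Fin D) =>
      ((∫ z, stmt8gg m z) * (6 * B ^ 4)) * ‖h‖ ^ 4 +
      ((∫ z, stmt8gg m z) * (3 / 4)) *
        ∫ x, ‖G (θ₀ + h) x - G θ₀ x - I₀ h x‖ ^ 2 ∂lam) =o[𝓝 0]
      fun h => ‖h‖ ^ 2 :=
    (h4o.const_mul_left _).add (hJo.const_mul_left _)
  refine IsBigO.trans_isLittleO ?_ hψo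
  rw [isBigO_iff]
  refine ⟨1, ?_⟩
  filter_upwards [hnbhd, hballε, hballB] with h hhΘ hhε hhB
  have hJ0 : (0:ℝ) ≤ ∫ x, ‖G (θ₀ + h) x - G θ₀ x - I₀ h x‖ ^ 2 ∂lam :=
    integral_nonneg fun x => by positivity
  have hΦ0 : (0:ℝ) ≤ ∫ x, ∫ y,
      (Real.sqrt ((2 * Real.pi) ^ (-(m:ℝ)/2) * Real.exp (-‖y - G (θ₀ + h) x‖ ^ 2 / 2))
        - Real.sqrt ((2 * Real.pi) ^ (-(m:ℝ)/2) * Real.exp (-‖y - G θ₀ x‖ ^ 2 / 2))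
        - 1 / 2 * ⟪y - G θ₀ x, I₀ h x⟫ *
          Real.sqrt ((2 * Real.pi) ^ (-(m:ℝ)/2) * Real.exp (-‖y - G θ₀ x‖ ^ 2 / 2))) ^ 2
      ∂(volume : Measure (EuclideanSpace ℝ (Fin m))) ∂lam :=
    integral_nonneg fun x => integral_nonneg fun y => sq_nonneg _
  rw [one_mul, Real.norm_of_nonneg hΦ0, Real.norm_of_nonneg (by positivity)]
  -- pointwise-in-x inner bound
  have hinner : ∀ x : X, (∫ y,
      (Real.sqrt ((2 * Real.pi) ^ (-(m:ℝ)/2) * Real.exp (-‖y - G (θ₀ + h) x‖ ^ 2 / 2))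
        - Real.sqrt ((2 * Real.pi) ^ (-(m:ℝ)/2) * Real.exp (-‖y - G θ₀ x‖ ^ 2 / 2))
        - 1 / 2 * ⟪y - G θ₀ x, I₀ h x⟫ *
          Real.sqrt ((2 * Real.pi) ^ (-(m:ℝ)/2) * Real.exp (-‖y - G θ₀ x‖ ^ 2 / 2))) ^ 2
      ∂(volume : Measure (EuclideanSpace ℝ (Fin m))))
      ≤ (∫ z, stmt8gg m z) * (6 * B ^ 4 * ‖h‖ ^ 4) +
        (∫ z, stmt8gg m z) * (3 / 4) * ‖G (θ₀ + h) x - G θ₀ x - I₀ h x‖ ^ 2 := by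
    intro x
    have hδ : ‖G (θ₀ + h) x - G θ₀ x‖ ≤ B * ‖h‖ := hlip h hhε hhΘ x
    have hb1 : ‖G (θ₀ + h) x - G θ₀ x‖ ≤ 1 := hδ.trans hhB
    have hib := stmt8_inner_bound (G θ₀ x) (G (θ₀ + h) x) (I₀ h x) hb1
    refine hib.trans ?_
    have hδ4 : ‖G (θ₀ + h) x - G θ₀ x‖ ^ 4 ≤ (B * ‖h‖) ^ 4 :=
      pow_le_pow_left₀ (norm_nonneg _) hδ 4
    have hmul := mul_le_mul_of_nonneg_right hδ4 hC0
    nlinarith [sq_nonneg ‖G (θ₀ + h) x - G θ₀ x - I₀ h x‖, hC0]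
  -- integrate the bound
  have hdvmeas : Measurable fun x => ‖G (θ₀ + h) x - G θ₀ x - I₀ h x‖ ^ 2 :=
    (((hGmeas _ hhΘ).sub (hGmeas _ hθΘ)).sub (hI₀meas h)).norm.pow_const 2
  have hdvint : Integrable (fun x => ‖G (θ₀ + h) x - G θ₀ x - I₀ h x‖ ^ 2) lam := by
    refine Integrable.mono' (integrable_const ((2 * B * ‖h‖) ^ 2))
      hdvmeas.aestronglyMeasurable (Eventually.of_forall fun x => ?_)
    rw [Real.norm_of_nonneg (by positivity)]
    have hdv : ‖G (θ₀ + h) x - G θ₀ x - I₀ h x‖ ≤ 2 * B * ‖h‖ := by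
      calc ‖G (θ₀ + h) x - G θ₀ x - I₀ h x‖
          ≤ ‖G (θ₀ + h) x - G θ₀ x‖ + ‖I₀ h x‖ := norm_sub_le _ _
        _ ≤ B * ‖h‖ + B * ‖h‖ := add_le_add (hlip h hhε hhΘ x) (hv h x)
        _ = 2 * B * ‖h‖ := by ring
    exact pow_le_pow_left₀ (norm_nonneg _) hdv 2
  have hgint : Integrable (fun x =>
      (∫ z, stmt8gg m z) * (6 * B ^ 4 * ‖h‖ ^ 4) +
      (∫ z, stmt8gg m z) * (3 / 4) * ‖G (θ₀ + h) x - G θ₀ x - I₀ h x‖ ^ 2) lam :=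
    (integrable_const _).add ((hdvint.const_mul _))
  calc (∫ x, ∫ y,
      (Real.sqrt ((2 * Real.pi) ^ (-(m:ℝ)/2) * Real.exp (-‖y - G (θ₀ + h) x‖ ^ 2 / 2))
        - Real.sqrt ((2 * Real.pi) ^ (-(m:ℝ)/2) * Real.exp (-‖y - G θ₀ x‖ ^ 2 / 2))
        - 1 / 2 * ⟪y - G θ₀ x, I₀ h x⟫ *
          Real.sqrt ((2 * Real.pi) ^ (-(m:ℝ)/2) * Real.exp (-‖y - G θ₀ x‖ ^ 2 / 2))) ^ 2
      ∂(volume : Measure (EuclideanSpace ℝ (Fin m))) ∂lam)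
      ≤ ∫ x, ((∫ z, stmt8gg m z) * (6 * B ^ 4 * ‖h‖ ^ 4) +
          (∫ z, stmt8gg m z) * (3 / 4) * ‖G (θ₀ + h) x - G θ₀ x - I₀ h x‖ ^ 2) ∂lam := by
        refine integral_mono_of_nonneg
          (Eventually.of_forall fun x => integral_nonneg fun y => sq_nonneg _) hgint
          (Eventually.of_forall fun x => hinner x)
    _ = (∫ z, stmt8gg m z) * (6 * B ^ 4 * ‖h‖ ^ 4) +
        (∫ z, stmt8gg m z) * (3 / 4) *
          ∫ x, ‖G (θ₀ + h) x - G θ₀ x - I₀ h x‖ ^ 2 ∂lam := by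
        rw [integral_add (integrable_const _) (hdvint.const_mul _), integral_const,
          integral_const_mul]
        simp [measure_univ]
    _ = ((∫ z, stmt8gg m z) * (6 * B ^ 4)) * ‖h‖ ^ 4 +
        ((∫ z, stmt8gg m z) * (3 / 4)) *
          ∫ x, ‖G (θ₀ + h) x - G θ₀ x - I₀ h x‖ ^ 2 ∂lam := by ring
end

section
/- Consider the random-design Gaussian regression model: let (X, 𝔄, λ) be a probability space, let m and D be natural numbers, let Θ ⊆ ℝ^D, and for each θ ∈ Θ let G_θ : X → ℝ^m be measurable, with density p_θ(y,x) = (2π)^{−m/2} exp(−‖y − G_θ(x)‖²/2), where ‖·‖ and ⟨·,·⟩ denote the Euclidean norm and inner product on ℝ^m. Let θ₀ be an interior point of Θ, assume U := sup_{θ∈Θ} sup_{x∈X} ‖G_θ(x)‖ < ∞, and assume there exist ε, B > 0 such that sup_{x∈X} ‖G_{θ₀+h}(x) − G_{θ₀}(x)‖ ≤ B‖h‖ whenever ‖h‖ < ε and θ₀ + h ∈ Θ. Define f_h(y,x) = (1/2)⟨y, G_{θ₀+h}(x) − G_{θ₀}(x)⟩ − (1/4)(‖G_{θ₀+h}(x)‖²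 − ‖G_{θ₀}(x)‖²). Then for all h ∈ ℝ^D with 0 < ‖h‖ < min(ε, 1) and θ₀ + h ∈ Θ, all x ∈ X and all y ∈ ℝ^m: | exp(f_h(y,x)) − 1 | ≤ ‖h‖ · exp( (B/2)(‖y‖ + U) ). -/
open MeasureTheory
open scoped RealInnerProductSpace

lemma aux_abs_exp_sub_one (t : ℝ) : |Real.exp t - 1| ≤ Real.exp |t| - 1 := by
  rcases le_or_gt 0 t with ht | ht
  · rw [abs_of_nonneg ht, abs_of_nonneg (by linarith [Real.one_le_exp ht])]
  · rw [abs_of_neg ht, abs_of_nonpos (by linarith [Real.exp_lt_one_iff.mpr ht])]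
    have h1 := Real.add_one_le_exp t
    have h2 := Real.add_one_le_exp (-t)
    linarith

lemma aux_exp_convex {s a : ℝ} (hs0 : 0 ≤ s) (hs1 : s ≤ 1) :
    Real.exp (s * a) ≤ 1 - s + s * Real.exp a := by
  have := convexOn_exp.2 (Set.mem_univ (0 : ℝ)) (Set.mem_univ a)
    (by linarith : (0:ℝ) ≤ 1 - s) hs0 (by ring)
  simpa [smul_eq_mul, Real.exp_zero] using this

/-- The domination bound in the proof of Proposition 4.1: under the uniform bound `U`
on `G` over `Θ` and the local Lipschitz property with constant `B` near the interior
point `θ₀`, the square-root likelihood ratio `exp(f_h(y,x))` satisfies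
`|exp(f_h(y,x)) - 1| ≤ ‖h‖ · exp((B/2)(‖y‖ + U))` for all `0 < ‖h‖ < min(ε,1)` with
`θ₀ + h ∈ Θ`, all `x` and all `y`. -/
theorem stmt10 {X : Type*} [MeasurableSpace X] (lam : Measure X)
    [IsProbabilityMeasure lam] (m D : ℕ)
    (Θ : Set (EuclideanSpace ℝ (Fin D)))
    (G : EuclideanSpace ℝ (Fin D) → X → EuclideanSpace ℝ (Fin m))
    (hGmeas : ∀ θ ∈ Θ, Measurable (G θ))
    (θ₀ : EuclideanSpace ℝ (Fin D)) (hθ₀ : θ₀ ∈ interior Θ)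
    (U : ℝ) (hU : ∀ θ ∈ Θ, ∀ x : X, ‖G θ x‖ ≤ U)
    (ε B : ℝ) (hε : 0 < ε) (hB : 0 < B)
    (hlip : ∀ h : EuclideanSpace ℝ (Fin D), ‖h‖ < ε → θ₀ + h ∈ Θ →
      ∀ x : X, ‖G (θ₀ + h) x - G θ₀ x‖ ≤ B * ‖h‖)
    (f : EuclideanSpace ℝ (Fin D) → EuclideanSpace ℝ (Fin m) → X → ℝ)
    (hf : ∀ h y x, f h y x =
      (1 / 2) * ⟪y, G (θ₀ + h) x - G θ₀ x⟫
        - (1 / 4) * (‖G (θ₀ + h) x‖ ^ 2 - ‖G θ₀ x‖ ^ 2)) :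
    ∀ h : EuclideanSpace ℝ (Fin D), 0 < ‖h‖ → ‖h‖ < min ε 1 → θ₀ + h ∈ Θ →
      ∀ x : X, ∀ y : EuclideanSpace ℝ (Fin m),
        |Real.exp (f h y x) - 1| ≤ ‖h‖ * Real.exp ((B / 2) * (‖y‖ + U)) := by
  intro h hpos hlt hmem x y
  have hε' : ‖h‖ < ε := lt_of_lt_of_le hlt (min_le_left _ _)
  have h1 : ‖h‖ ≤ 1 := le_of_lt (lt_of_lt_of_le hlt (min_le_right _ _))
  set a : ℝ := (B / 2) * (‖y‖ + U) with ha
  have hΔ : ‖G (θ₀ + h) x - G θ₀ x‖ ≤ B * ‖h‖ := hlip h hε' hmem x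
  have hU1 : ‖G (θ₀ + h) x‖ ≤ U := hU _ hmem x
  have hU0 : 0 ≤ U := le_trans (norm_nonneg _) hU1
  -- bound on |f|
  have hfb : |f h y x| ≤ ‖h‖ * a := by
    rw [hf]
    have hin : |⟪y, G (θ₀ + h) x - G θ₀ x⟫| ≤ ‖y‖ * (B * ‖h‖) :=
      le_trans (abs_real_inner_le_norm _ _)
        (mul_le_mul_of_nonneg_left hΔ (norm_nonneg _))
    have hsq : |‖G (θ₀ + h) x‖ ^ 2 - ‖G θ₀ x‖ ^ 2| ≤ (B * ‖h‖) * (2 * U) := by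
      have e : ‖G (θ₀ + h) x‖ ^ 2 - ‖G θ₀ x‖ ^ 2
          = (‖G (θ₀ + h) x‖ - ‖G θ₀ x‖) * (‖G (θ₀ + h) x‖ + ‖G θ₀ x‖) := by ring
      rw [e, abs_mul]
      have hd : |‖G (θ₀ + h) x‖ - ‖G θ₀ x‖| ≤ B * ‖h‖ :=
        le_trans (abs_norm_sub_norm_le _ _) hΔ
      have hs : |‖G (θ₀ + h) x‖ + ‖G θ₀ x‖| ≤ 2 * U := by
        rw [abs_of_nonneg (by positivity)]
        have := hU θ₀ (interior_subset hθ₀) x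
        linarith
      exact mul_le_mul hd hs (abs_nonneg _) (by positivity)
    have := abs_sub_abs_le_abs_sub ((1 / 2) * ⟪y, G (θ₀ + h) x - G θ₀ x⟫)
      ((1 / 4) * (‖G (θ₀ + h) x‖ ^ 2 - ‖G θ₀ x‖ ^ 2))
    calc |(1 / 2) * ⟪y, G (θ₀ + h) x - G θ₀ x⟫
            - (1 / 4) * (‖G (θ₀ + h) x‖ ^ 2 - ‖G θ₀ x‖ ^ 2)|
        ≤ (1/2) * |⟪y, G (θ₀ + h) x - G θ₀ x⟫|
            + (1/4) * |‖G (θ₀ + h) x‖ ^ 2 - ‖G θ₀ x‖ ^ 2| := by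
          refine le_trans (abs_sub _ _) ?_
          rw [abs_mul, abs_mul, show |(1:ℝ)/2| = 1/2 from by norm_num,
            show |(1:ℝ)/4| = 1/4 from by norm_num]
      _ ≤ (1/2) * (‖y‖ * (B * ‖h‖)) + (1/4) * ((B * ‖h‖) * (2 * U)) := by
          gcongr
      _ = ‖h‖ * a := by rw [ha]; ring
  have ha0 : 0 ≤ a := by positivity
  calc |Real.exp (f h y x) - 1| ≤ Real.exp |f h y x| - 1 := aux_abs_exp_sub_one _
    _ ≤ Real.exp (‖h‖ * a) - 1 := by
        have := Real.exp_le_exp.mpr hfb; linarith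
    _ ≤ (1 - ‖h‖ + ‖h‖ * Real.exp a) - 1 := by
        linarith [aux_exp_convex (a := a) (le_of_lt hpos) h1]
    _ ≤ ‖h‖ * Real.exp a := by linarith
end
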